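/- arXiv:1401.4451 — 6 statements merged into one kernel-verified Lean document; each statement's English description precedes it below -/
import Mathlib

section
/- If a communication scheme is (1-ε)-hidable, i.e., for every message m and every observation x_W the ratio Pr(M=m | X_W = x_W)/Pr(M=m) lies in [1-ε, 1+ε], then the mutual information satisfies I(M; X_W) ≤ ε·H(M) + (1-ε)·log₂(1+ε). -/
open Finset Real

/-- Shannon entropy (in bits) of a pmf on a finite alphabet. -/
noncomputable def entropy {α : Type*} [Fintype α] (p : α → ℝ) : ℝ :=
  -∑ a, p a * Real.logb 2 (p a)

/-- Mutual information (in bits) computed from a joint pmf on `α × β`. -/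
noncomputable def mutualInfo {α β : Type*} [Fintype α] [Fintype β] (p : α × β → ℝ) : ℝ :=
  ∑ m : α, ∑ x : β,
    p (m, x) * Real.logb 2 (p (m, x) / ((∑ y, p (m, y)) * (∑ m', p (m', x))))

/-!
Write `q = Pr(M = m | X_W = x)` and `r = Pr(M = m)`. Hidability gives `(1-ε) r ≤ q ≤ (1+ε) r`,
and from this `q log q ≤ (1-ε) r log((1+ε) r)`: when `(1+ε) r ≤ 1` both logarithms are
nonpositive and `log q ≤ log((1+ε) r)`, otherwise the left side is `≤ 0 ≤` the right side.
Splitting `log (q / r) = log q - log r` in each term of `I(M; X_W)` and averaging the bound over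
`x` turns `-∑ Pr(m,x) log r` into `H(M)` and the other part into `(1-ε)(log(1+ε) - H(M))`.
-/

lemma mul_logb_le_of_le_of_le {ε q r : ℝ} (hε1 : ε < 1) (hr : 0 < r) (hq1 : q ≤ 1)
    (hlo : (1 - ε) * r ≤ q) (hhi : q ≤ (1 + ε) * r) :
    q * logb 2 q ≤ (1 - ε) * r * logb 2 ((1 + ε) * r) := by
  have hq : 0 < q := lt_of_lt_of_le (mul_pos (by linarith) hr) hlo
  rcases le_or_gt ((1 + ε) * r) 1 with hsmall | hlarge
  · have hlog : logb 2 q ≤ logb 2 ((1 + ε) * r) := logb_le_logb_of_le one_lt_two hq hhi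
    have hnonpos : logb 2 ((1 + ε) * r) ≤ 0 := logb_nonpos one_lt_two (by linarith) hsmall
    calc q * logb 2 q ≤ q * logb 2 ((1 + ε) * r) := by gcongr
      _ ≤ (1 - ε) * r * logb 2 ((1 + ε) * r) := mul_le_mul_of_nonpos_right hlo hnonpos
  · have hneg : q * logb 2 q ≤ 0 :=
      mul_nonpos_of_nonneg_of_nonpos hq.le (logb_nonpos one_lt_two hq.le hq1)
    have hpos : 0 ≤ (1 - ε) * r * logb 2 ((1 + ε) * r) :=
      mul_nonneg (mul_nonneg (by linarith) hr.le) (logb_nonneg one_lt_two hlarge.le)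
    linarith

lemma mul_logb_div_mul_le {ε a r s : ℝ} (hε1 : ε < 1) (ha : 0 ≤ a) (has : a ≤ s) (hr : 0 < r)
    (hid : 0 < s → 1 - ε ≤ a / s / r ∧ a / s / r ≤ 1 + ε) :
    a * logb 2 (a / (r * s)) ≤ a * -logb 2 r + (1 - ε) * (s * (r * logb 2 ((1 + ε) * r))) := by
  rcases (ha.trans has).eq_or_lt with hs | hs
  · obtain rfl : a = 0 := le_antisymm (hs ▸ has) ha
    simp [← hs]
  obtain ⟨hlo, hhi⟩ := hid hs
  set q := a / s with hq
  have hbound := mul_logb_le_of_le_of_le hε1 hr ((div_le_one hs).2 has)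
    ((le_div_iff₀ hr).1 hlo) ((div_le_iff₀ hr).1 hhi)
  rcases ha.eq_or_lt with rfl | ha
  · simp only [zero_div, zero_mul, logb_zero, mul_zero, zero_add] at hbound ⊢
    nlinarith [hs.le]
  have hsplit : logb 2 (a / (r * s)) = logb 2 q - logb 2 r := by
    rw [← logb_div (div_pos ha hs).ne' hr.ne', div_div, mul_comm]
  have ha_eq : a = s * q := by rw [hq, mul_div_cancel₀ _ hs.ne']
  rw [hsplit]
  calc a * (logb 2 q - logb 2 r) = s * (q * logb 2 q) + a * -logb 2 r := by rw [ha_eq]; ring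
    _ ≤ s * ((1 - ε) * r * logb 2 ((1 + ε) * r)) + a * -logb 2 r := by gcongr
    _ = _ := by ring

lemma sum_mul_logb_const_mul {α : Type*} [Fintype α] {q : α → ℝ} {c : ℝ} (hq : ∑ a, q a = 1)
    (hc : c ≠ 0) : ∑ a, q a * logb 2 (c * q a) = logb 2 c - entropy q := by
  have hterm : ∀ a, q a * logb 2 (c * q a) = q a * logb 2 c + q a * logb 2 (q a) := by
    intro a
    rcases eq_or_ne (q a) 0 with h | h
    · simp [h]
    · rw [logb_mul hc h, mul_add]
  simp only [hterm, sum_add_distrib, ← sum_mul, hq, one_mul, entropy, sub_neg_eq_add]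

/-- If a scheme is `(1-ε)`-hidable, then
`I(M; X_W) ≤ ε·H(M) + (1-ε)·log₂(1+ε)`. -/
theorem stmt0 {M X : Type*} [Fintype M] [Fintype X]
    (p : M × X → ℝ) (ε : ℝ) (hε0 : 0 < ε) (hε1 : ε < 1)
    (hp0 : ∀ z, 0 ≤ p z) (hp1 : ∑ z, p z = 1)
    (hM : ∀ m : M, 0 < ∑ x, p (m, x))
    (hid : ∀ (m : M) (x : X), 0 < (∑ m', p (m', x)) →
      1 - ε ≤ (p (m, x) / ∑ m', p (m', x)) / (∑ y, p (m, y)) ∧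
      (p (m, x) / ∑ m', p (m', x)) / (∑ y, p (m, y)) ≤ 1 + ε) :
    mutualInfo p ≤ ε * entropy (fun m => ∑ x, p (m, x)) + (1 - ε) * Real.logb 2 (1 + ε) := by
  set pM : M → ℝ := fun m => ∑ x, p (m, x)
  set pX : X → ℝ := fun x => ∑ m', p (m', x)
  have hpM : ∑ m, pM m = 1 := by rw [← hp1, Fintype.sum_prod_type]
  have hpX : ∑ x, pX x = 1 := by rw [← hp1, Fintype.sum_prod_type, sum_comm]
  have hterm : ∀ m x, p (m, x) * logb 2 (p (m, x) / (pM m * pX x)) ≤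
      p (m, x) * -logb 2 (pM m) + (1 - ε) * (pX x * (pM m * logb 2 ((1 + ε) * pM m))) :=
    fun m x => mul_logb_div_mul_le hε1 (hp0 _)
      (single_le_sum (fun m' _ => hp0 (m', x)) (mem_univ m)) (hM m) (hid m x)
  calc mutualInfo p
      ≤ ∑ m, ∑ x, (p (m, x) * -logb 2 (pM m) +
          (1 - ε) * (pX x * (pM m * logb 2 ((1 + ε) * pM m)))) :=
        sum_le_sum fun m _ => sum_le_sum fun x _ => hterm m x
    _ = entropy pM + (1 - ε) * (logb 2 (1 + ε) - entropy pM) := by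
        simp only [sum_add_distrib, ← sum_mul, ← mul_sum, hpX, one_mul]
        rw [sum_mul_logb_const_mul hpM (by linarith), entropy, ← sum_neg_distrib]
        simp only [mul_neg, pM]
    _ = ε * entropy pM + (1 - ε) * logb 2 (1 + ε) := by ring
end

section
/- If a scheme is (1-ε)-hidable, then for every message m and observation x_W with positive probability, H(M | X_W = x_W) ≥ (1-ε)·H(M) - (1-ε)·log₂(1+ε). -/
/-! If every probability `q m` lies within a factor `1 ± ε` of `a m`, then
`-q log q ≥ -(1 - ε) a log ((1 + ε) a)` termwise: `log` is monotone, and when `log ((1 + ε) a)` is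
positive the right-hand side is negative while `-q log q ≥ 0`. Summing over `m` and splitting the
logarithm of the product gives the entropy bound. -/

open Finset Real

lemma neg_mul_logb_le_neg_mul_logb_self {b c q r : ℝ} (hb : 1 < b) (hc : 0 ≤ c) (hq : 0 < q)
    (hq1 : q ≤ 1) (hcq : c ≤ q) (hqr : q ≤ r) :
    -(c * logb b r) ≤ -(q * logb b q) := by
  have hlog : logb b q ≤ logb b r := logb_le_logb_of_le hb hq hqr
  rcases le_or_gt (logb b r) 0 with hr | hr
  · nlinarith [mul_le_mul_of_nonneg_right hcq (neg_nonneg.mpr hr)]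
  · have hq_log : logb b q ≤ 0 := logb_nonpos hb hq.le hq1
    nlinarith [mul_nonpos_of_nonneg_of_nonpos hq.le hq_log]

theorem le_entropy_of_mul_bounds {α : Type*} [Fintype α] {q a : α → ℝ} {ε : ℝ}
    (hε0 : 0 < ε) (hε1 : ε < 1) (ha : ∀ m, 0 < a m) (ha1 : ∑ m, a m = 1) (hq1 : ∀ m, q m ≤ 1)
    (hlo : ∀ m, (1 - ε) * a m ≤ q m) (hhi : ∀ m, q m ≤ (1 + ε) * a m) :
    (1 - ε) * entropy a - (1 - ε) * logb 2 (1 + ε) ≤ entropy q := by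
  have hterm : ∀ m, (1 - ε) * -(a m * logb 2 (a m)) - (1 - ε) * (a m * logb 2 (1 + ε)) ≤
      -(q m * logb 2 (q m)) := by
    intro m
    have hc : 0 ≤ (1 - ε) * a m := mul_nonneg (by linarith) (ha m).le
    have hq : 0 < q m := (mul_pos (by linarith) (ha m)).trans_le (hlo m)
    calc (1 - ε) * -(a m * logb 2 (a m)) - (1 - ε) * (a m * logb 2 (1 + ε))
        = -((1 - ε) * a m * logb 2 ((1 + ε) * a m)) := by
          rw [logb_mul (by linarith) (ha m).ne']; ring
      _ ≤ -(q m * logb 2 (q m)) :=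
          neg_mul_logb_le_neg_mul_logb_self one_lt_two hc hq (hq1 m) (hlo m) (hhi m)
  have hsum := Finset.sum_le_sum fun m (_ : m ∈ univ) => hterm m
  rw [sum_sub_distrib, ← mul_sum, ← mul_sum, ← sum_mul, ha1, one_mul, sum_neg_distrib] at hsum
  simpa only [entropy, sum_neg_distrib] using hsum

/-- If a scheme is `(1-ε)`-hidable, then for every observation `x_W` of positive
probability, `H(M | X_W = x_W) ≥ (1-ε)·H(M) - (1-ε)·log₂(1+ε)`. -/
theorem stmt1 {M X : Type*} [Fintype M] [Fintype X]
    (p : M × X → ℝ) (ε : ℝ) (hε0 : 0 < ε) (hε1 : ε < 1)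
    (hp0 : ∀ z, 0 ≤ p z) (hp1 : ∑ z, p z = 1)
    (hM : ∀ m : M, 0 < ∑ x, p (m, x))
    (hid : ∀ (m : M) (x : X), 0 < (∑ m', p (m', x)) →
      1 - ε ≤ (p (m, x) / ∑ m', p (m', x)) / (∑ y, p (m, y)) ∧
      (p (m, x) / ∑ m', p (m', x)) / (∑ y, p (m, y)) ≤ 1 + ε) :
    ∀ x : X, 0 < (∑ m', p (m', x)) →
      entropy (fun m => p (m, x) / ∑ m', p (m', x)) ≥
        (1 - ε) * entropy (fun m => ∑ y, p (m, y)) - (1 - ε) * Real.logb 2 (1 + ε) := by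
  intro x hx
  refine le_entropy_of_mul_bounds hε0 hε1 hM ?_ (fun m => ?_)
    (fun m => (le_div_iff₀ (hM m)).mp (hid m x hx).1)
    (fun m => (div_le_iff₀ (hM m)).mp (hid m x hx).2)
  · rw [← hp1, Fintype.sum_prod_type]
  · exact div_le_one_of_le₀ (single_le_sum (fun m' _ => hp0 (m', x)) (mem_univ m)) hx.le
end

section
/- If P and Q are probability distributions on a finite alphabet X with total variation distance θ = (1/2)Σ|P(x)-Q(x)| satisfying 0 ≤ θ ≤ 1/4, then |H(P) - H(Q)| ≤ -2θ·log₂(2θ/|X|). -/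
/-!
With `η t = -t log t`, it suffices to bound `|η p - η q| ≤ η |p - q|` for `p, q ∈ [0, 1]` with
`|p - q| ≤ 1/2`, sum over `X`, and apply Jensen's inequality to the concave `η`:
`∑ η |P x - Q x| ≤ |X| η (2θ / |X|)`. For the pointwise bound, concavity makes the increments
`η (t + d) - η t` decrease in `t`, so they lie between `η 1 - η (1 - d) = -η (1 - d)` and
`η d - η 0 = η d`; finally `η (1 - d) ≤ η d` when `d ≤ 1/2`.
-/

open Finset Real

section Concave

variable {𝕜 : Type*} [Field 𝕜] [LinearOrder 𝕜] [IsStrictOrderedRing 𝕜] {s : Set 𝕜} {f : 𝕜 → 𝕜}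

theorem ConcaveOn.map_add_sub_map_le {x y d : 𝕜} (hf : ConcaveOn 𝕜 s f) (hx : x ∈ s)
    (hyd : y + d ∈ s) (hxy : x ≤ y) (hd : 0 ≤ d) :
    f (y + d) - f y ≤ f (x + d) - f x := by
  rcases hd.eq_or_lt with rfl | hd
  · simp
  have hL : 0 < y + d - x := by linarith
  have hw₁ : 0 ≤ (y - x) / (y + d - x) := div_nonneg (by linarith) hL.le
  have hw₂ : 0 ≤ d / (y + d - x) := div_nonneg hd.le hL.le
  have hsum : (y - x) / (y + d - x) + d / (y + d - x) = 1 := by field_simp; ring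
  have h₁ := hf.2 hx hyd hw₁ hw₂ hsum
  have h₂ := hf.2 hx hyd hw₂ hw₁ (by rw [add_comm, hsum])
  simp only [smul_eq_mul] at h₁ h₂
  rw [show (y - x) / (y + d - x) * x + d / (y + d - x) * (y + d) = x + d by field_simp; ring]
    at h₁
  rw [show d / (y + d - x) * x + (y - x) / (y + d - x) * (y + d) = y by field_simp; ring] at h₂
  linear_combination h₁ + h₂ - (f x + f (y + d)) * hsum

theorem ConcaveOn.sum_map_le_card_mul_map_mean {ι : Type*} [Fintype ι] [Nonempty ι] {p : ι → 𝕜}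
    (hf : ConcaveOn 𝕜 s f) (hp : ∀ i, p i ∈ s) :
    ∑ i, f (p i) ≤ Fintype.card ι * f ((∑ i, p i) / Fintype.card ι) := by
  have hn : (0 : 𝕜) < Fintype.card ι := by exact_mod_cast Fintype.card_pos
  have h := hf.le_map_sum (t := univ) (w := fun _ => (Fintype.card ι : 𝕜)⁻¹) (p := p)
    (fun _ _ => inv_nonneg.2 hn.le) (by simp [hn.ne']) (fun i _ => hp i)
  simp only [smul_eq_mul, ← mul_sum] at h
  rw [div_eq_inv_mul]
  calc ∑ i, f (p i) = Fintype.card ι * ((Fintype.card ι : 𝕜)⁻¹ * ∑ i, f (p i)) := by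
        field_simp
    _ ≤ _ := mul_le_mul_of_nonneg_left h hn.le

end Concave

namespace Real

theorem negMulLog_add_sub_negMulLog_le {a d : ℝ} (ha : 0 ≤ a) (hd : 0 ≤ d) :
    negMulLog (a + d) - negMulLog a ≤ negMulLog d := by
  simpa using concaveOn_negMulLog.map_add_sub_map_le (x := 0) Set.self_mem_Ici
    (Set.mem_Ici.2 (add_nonneg ha hd)) ha hd

theorem negMulLog_sub_negMulLog_add_le {a d : ℝ} (ha : 0 ≤ a) (hd : 0 ≤ d) (had : a + d ≤ 1) :
    negMulLog a - negMulLog (a + d) ≤ negMulLog (1 - d) := by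
  have := concaveOn_negMulLog.map_add_sub_map_le (y := 1 - d) ha (by simp) (by linarith) hd
  simp only [sub_add_cancel, negMulLog_one] at this
  linarith

/-- The secant slope of the concave `log` through `1` is antitone; compare it at `d` and `1 - d`. -/
theorem negMulLog_one_sub_le {d : ℝ} (hd : 0 ≤ d) (hd2 : d ≤ 1 / 2) :
    negMulLog (1 - d) ≤ negMulLog d := by
  rcases hd.eq_or_lt with rfl | hd
  · simp
  have hslope := strictConcaveOn_log_Ioi.concaveOn.neg.secant_mono (a := 1)
    (Set.mem_Ioi.2 one_pos) (Set.mem_Ioi.2 hd) (Set.mem_Ioi.2 (by linarith : (0 : ℝ) < 1 - d))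
    (by linarith) (by linarith) (by linarith)
  simp only [Pi.neg_apply, log_one, neg_zero, sub_zero, sub_sub_cancel_left] at hslope
  rw [← neg_div_neg_eq (-log d), neg_neg, neg_sub, neg_div_neg_eq,
    div_le_div_iff₀ (by linarith) hd] at hslope
  simp only [negMulLog]
  linarith

theorem abs_negMulLog_sub_negMulLog_le {p q : ℝ} (hp : 0 ≤ p) (hp1 : p ≤ 1) (hq : 0 ≤ q)
    (hq1 : q ≤ 1) (hpq : |p - q| ≤ 1 / 2) :
    |negMulLog p - negMulLog q| ≤ negMulLog |p - q| := by
  wlog hle : p ≤ q generalizing p q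
  · rw [abs_sub_comm, abs_sub_comm p] at *
    exact this hq hq1 hp hp1 hpq (le_of_not_ge hle)
  obtain ⟨d, hd, rfl⟩ : ∃ d, 0 ≤ d ∧ q = p + d := ⟨q - p, by linarith, by ring⟩
  rw [show p - (p + d) = -d by ring, abs_neg, abs_of_nonneg hd] at *
  rw [abs_le]
  constructor
  · linarith [negMulLog_add_sub_negMulLog_le hp hd]
  · linarith [negMulLog_sub_negMulLog_add_le hp hd hq1, negMulLog_one_sub_le hd hpq]

end Real

theorem entropy_eq_sum_negMulLog_div_log_two {α : Type*} [Fintype α] (p : α → ℝ) :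
    entropy p = (∑ a, negMulLog (p a)) / log 2 := by
  simp only [entropy, negMulLog, logb, sum_div, ← sum_neg_distrib]
  congr 1 with a
  ring

theorem stmt5_general {α : Type*} [Fintype α]
    (P Q : α → ℝ)
    (hP0 : ∀ x, 0 ≤ P x) (hP1 : ∑ x, P x = 1)
    (hQ0 : ∀ x, 0 ≤ Q x) (hQ1 : ∑ x, Q x = 1)
    (θ : ℝ) (hθ : θ = (1 / 2) * ∑ x, |P x - Q x|) (hθ4 : θ ≤ 1 / 4) :
    |entropy P - entropy Q| ≤ -(2 * θ) * Real.logb 2 (2 * θ / Fintype.card α) := by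
  have hne : Nonempty α := by
    by_contra h
    simp [not_nonempty_iff.1 h] at hP1
  have hle_sum {p : α → ℝ} (hp : ∀ x, 0 ≤ p x) (x : α) : p x ≤ ∑ y, p y :=
    single_le_sum (fun y _ => hp y) (mem_univ x)
  have hdist (x : α) : |P x - Q x| ≤ 1 / 2 := by
    linarith [hle_sum (fun y => abs_nonneg (P y - Q y)) x]
  have hpointwise : |∑ x, negMulLog (P x) - ∑ x, negMulLog (Q x)| ≤
      ∑ x, negMulLog |P x - Q x| := by
    rw [← sum_sub_distrib]
    refine (abs_sum_le_sum_abs _ _).trans (sum_le_sum fun x _ => ?_)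
    exact abs_negMulLog_sub_negMulLog_le (hP0 x) (hP1 ▸ hle_sum hP0 x) (hQ0 x)
      (hQ1 ▸ hle_sum hQ0 x) (hdist x)
  have hjensen := concaveOn_negMulLog.sum_map_le_card_mul_map_mean
    (p := fun x => |P x - Q x|) (fun x => Set.mem_Ici.2 (abs_nonneg _))
  have hsum : ∑ x, |P x - Q x| = 2 * θ := by rw [hθ]; ring
  have hrhs : -(2 * θ) * logb 2 (2 * θ / Fintype.card α) =
      Fintype.card α * negMulLog (2 * θ / Fintype.card α) / log 2 := by
    rw [logb, negMulLog]
    field_simp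
  rw [entropy_eq_sum_negMulLog_div_log_two, entropy_eq_sum_negMulLog_div_log_two, ← sub_div,
    abs_div, abs_of_pos (log_pos one_lt_two), hrhs, ← hsum]
  gcongr
  exact hpointwise.trans hjensen

/-- Continuity of entropy (Csiszár–Körner Lemma 2.7): if the total variation
distance `θ` between pmfs `P` and `Q` satisfies `θ ≤ 1/4`, then
`|H(P) - H(Q)| ≤ -2θ·log₂(2θ/|X|)`. -/
theorem stmt5 {α : Type*} [Fintype α] (hcard : 2 ≤ Fintype.card α)
    (P Q : α → ℝ)
    (hP0 : ∀ x, 0 ≤ P x) (hP1 : ∑ x, P x = 1)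
    (hQ0 : ∀ x, 0 ≤ Q x) (hQ1 : ∑ x, Q x = 1)
    (θ : ℝ) (hθ : θ = (1 / 2) * ∑ x, |P x - Q x|) (hθ4 : θ ≤ 1 / 4) :
    |entropy P - entropy Q| ≤ -(2 * θ) * Real.logb 2 (2 * θ / Fintype.card α) :=
  stmt5_general P Q hP0 hP1 hQ0 hQ1 θ hθ hθ4
end

section
/- Let p̂ and p be two probability distributions on observations x_W such that there exist constants 0 < ε, ε₁ < 1 and a function S(x_W) ≥ 0 with (1-ε)/(1+ε₁)·S(x_W) ≤ p̂(x_W) ≤ (1+ε)/(1-ε₁)·S(x_W) for all x_W, and p(x_W) = S(x_W) + r(x_W) with r(x_W) ≥ 0 and Σ r(x_W) ≤ δ. Then the total variation distance satisfies V(p̂, p) ≤ (1/2)·max(ε+ε₁+ε·ε₁, (ε+ε₁)/(1-ε₁)) + δ/2 ≤ (ε + ε₁)/(1-ε₁) + δ. -/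
open Finset

/-!
With `k = (ε + ε₁)/(1 - ε₁)` the sandwich gives `(1 - k) S ≤ p̂ ≤ (1 + k) S`, so
`|p̂ - p| = |p̂ - S - r| ≤ k S + r` pointwise. Summing, with `Σ S ≤ Σ p = 1` and `Σ r ≤ δ`,
gives `Σ |p̂ - p| ≤ k + δ`; and `k` is the larger of the two terms in the maximum.
-/

lemma one_sub_div_one_sub_le_div_one_add {ε ε₁ : ℝ} (hε : 0 ≤ ε) (hε₁0 : 0 ≤ ε₁)
    (hε₁1 : ε₁ < 1) : 1 - (ε + ε₁) / (1 - ε₁) ≤ (1 - ε) / (1 + ε₁) := by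
  set k := (ε + ε₁) / (1 - ε₁)
  have hk : k * (1 - ε₁) = ε + ε₁ := div_mul_cancel₀ _ (by linarith)
  have hk0 : 0 ≤ k := div_nonneg (by linarith) (by linarith)
  rw [le_div_iff₀ (by linarith)]
  nlinarith [mul_nonneg hk0 hε₁0]

lemma add_add_mul_le_div_one_sub {ε ε₁ : ℝ} (hε : 0 ≤ ε) (hε₁ : ε₁ < 1) :
    ε + ε₁ + ε * ε₁ ≤ (ε + ε₁) / (1 - ε₁) := by
  rw [le_div_iff₀ (by linarith)]
  nlinarith [mul_nonneg (add_nonneg zero_le_one hε) (sq_nonneg ε₁)]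

lemma one_add_div_one_sub_eq {ε ε₁ : ℝ} (hε₁ : ε₁ < 1) :
    (1 + ε) / (1 - ε₁) = 1 + (ε + ε₁) / (1 - ε₁) := by
  have : 1 - ε₁ ≠ 0 := by linarith
  field_simp
  ring

lemma abs_sub_add_le_of_sandwich {a s t k : ℝ} (hlo : (1 - k) * s ≤ a) (hhi : a ≤ (1 + k) * s)
    (ht : 0 ≤ t) : |a - (s + t)| ≤ k * s + t := by
  rw [abs_le]
  constructor <;> linarith

lemma sum_abs_sub_le_of_sandwich {α : Type*} [Fintype α] {q p S r : α → ℝ} {k δ : ℝ}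
    (hk : 0 ≤ k) (hsand : ∀ x, (1 - k) * S x ≤ q x ∧ q x ≤ (1 + k) * S x)
    (hr : ∀ x, p x = S x + r x) (hr0 : ∀ x, 0 ≤ r x) (hp1 : ∑ x, p x = 1)
    (hrδ : ∑ x, r x ≤ δ) : ∑ x, |q x - p x| ≤ k + δ := by
  have hpt : ∀ x, |q x - p x| ≤ k * S x + r x := fun x => by
    rw [hr x]
    exact abs_sub_add_le_of_sandwich (hsand x).1 (hsand x).2 (hr0 x)
  have hS1 : ∑ x, S x ≤ 1 := by
    have : ∑ x, p x = ∑ x, S x + ∑ x, r x := by simp only [hr, sum_add_distrib]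
    linarith [sum_nonneg fun x (_ : x ∈ univ) => hr0 x]
  calc ∑ x, |q x - p x| ≤ ∑ x, (k * S x + r x) := sum_le_sum fun x _ => hpt x
    _ = k * ∑ x, S x + ∑ x, r x := by rw [sum_add_distrib, mul_sum]
    _ ≤ k * 1 + δ := add_le_add (mul_le_mul_of_nonneg_left hS1 hk) hrδ
    _ = k + δ := by rw [mul_one]

theorem stmt11_general {α : Type*} [Fintype α]
    (phat p S r : α → ℝ) (ε ε₁ δ : ℝ)
    (hε0 : 0 < ε) (hε₁0 : 0 < ε₁) (hε₁1 : ε₁ < 1)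
    (hp1 : ∑ x, p x = 1)
    (hS0 : ∀ x, 0 ≤ S x)
    (hsand : ∀ x, (1 - ε) / (1 + ε₁) * S x ≤ phat x ∧
      phat x ≤ (1 + ε) / (1 - ε₁) * S x)
    (hr : ∀ x, p x = S x + r x) (hr0 : ∀ x, 0 ≤ r x) (hrδ : ∑ x, r x ≤ δ) :
    (1 / 2) * (∑ x, |phat x - p x|) ≤
        (1 / 2) * max (ε + ε₁ + ε * ε₁) ((ε + ε₁) / (1 - ε₁)) + δ / 2 ∧
      (1 / 2) * max (ε + ε₁ + ε * ε₁) ((ε + ε₁) / (1 - ε₁)) + δ / 2 ≤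
        (ε + ε₁) / (1 - ε₁) + δ := by
  set k := (ε + ε₁) / (1 - ε₁)
  have hk0 : 0 ≤ k := div_nonneg (by linarith) (by linarith)
  have hδ0 : 0 ≤ δ := (sum_nonneg fun x (_ : x ∈ univ) => hr0 x).trans hrδ
  have hsand' : ∀ x, (1 - k) * S x ≤ phat x ∧ phat x ≤ (1 + k) * S x := fun x =>
    ⟨(mul_le_mul_of_nonneg_right
        (one_sub_div_one_sub_le_div_one_add hε0.le hε₁0.le hε₁1) (hS0 x)).trans (hsand x).1,
      (hsand x).2.trans_eq (by rw [one_add_div_one_sub_eq hε₁1])⟩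
  have hV := sum_abs_sub_le_of_sandwich hk0 hsand' hr hr0 hp1 hrδ
  rw [max_eq_right (add_add_mul_le_div_one_sub hε0.le hε₁1)]
  constructor <;> linarith

/-- Abstract deniability bound: if `p̂` is sandwiched around a nonnegative
function `S` as `(1-ε)/(1+ε₁)·S ≤ p̂ ≤ (1+ε)/(1-ε₁)·S` and `p = S + r` with
`r ≥ 0`, `Σr ≤ δ`, then the total variation distance satisfies
`V(p̂,p) ≤ (1/2)·max(ε+ε₁+ε·ε₁, (ε+ε₁)/(1-ε₁)) + δ/2 ≤ (ε+ε₁)/(1-ε₁) + δ`. -/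
theorem stmt11 {α : Type*} [Fintype α]
    (phat p S r : α → ℝ) (ε ε₁ δ : ℝ)
    (hε0 : 0 < ε) (hε1 : ε < 1) (hε₁0 : 0 < ε₁) (hε₁1 : ε₁ < 1)
    (hphat0 : ∀ x, 0 ≤ phat x) (hphat1 : ∑ x, phat x = 1)
    (hp0 : ∀ x, 0 ≤ p x) (hp1 : ∑ x, p x = 1)
    (hS0 : ∀ x, 0 ≤ S x)
    (hsand : ∀ x, (1 - ε) / (1 + ε₁) * S x ≤ phat x ∧
      phat x ≤ (1 + ε) / (1 - ε₁) * S x)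
    (hr : ∀ x, p x = S x + r x) (hr0 : ∀ x, 0 ≤ r x) (hrδ : ∑ x, r x ≤ δ) :
    (1 / 2) * (∑ x, |phat x - p x|) ≤
        (1 / 2) * max (ε + ε₁ + ε * ε₁) ((ε + ε₁) / (1 - ε₁)) + δ / 2 ∧
      (1 / 2) * max (ε + ε₁ + ε * ε₁) ((ε + ε₁) / (1 - ε₁)) + δ / 2 ≤
        (ε + ε₁) / (1 - ε₁) + δ :=
  stmt11_general phat p S r ε ε₁ δ hε0 hε₁0 hε₁1 hp1 hS0 hsand hr hr0 hrδ
end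

section
/- The reliable-deniable capacity of a multipath network, C_d = sup over distributions p on the alphabet X = {0,...,2^C - 1} whose marginal on every W ∈ 𝒲 equals the innocent marginal, of H(p), upper-bounds any achievable deniable rate: if a rate-R encoder with block length n satisfies the deniability constraints (the marginal induced distribution equals the innocent marginal on every W ∈ 𝒲) and Fano-reliability with error ε_n, then nR ≤ n·C_d + n·ε_n. -/
/-!
Since the message is uniform, every atom of the joint law of (M, X) has mass at most 1/N, so
log₂ N ≤ H(M, X) = H(M | X) + H(X). Fano's bound controls H(M | X) by n·ε_n. By Gibbs' inequality
against the product of the per-step marginals, H(X) ≤ ∑ⱼ H(X(j)), and deniability says that each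
per-step marginal is feasible for C_d, so H(X(j)) ≤ C_d.
-/

open Finset Real

variable {α β ι : Type*}

section Entropy

variable [Fintype α]

lemma mul_logb_sub_mul_logb_le {a b : ℝ} (ha : 0 ≤ a) (hb : 0 ≤ b) (hab : b = 0 → a = 0) :
    a * logb 2 b - a * logb 2 a ≤ (b - a) / log 2 := by
  rcases ha.eq_or_lt with rfl | ha
  · simpa using div_nonneg hb (log_nonneg one_le_two)
  have hb : 0 < b := hb.lt_of_ne' fun h => ha.ne' (hab h)
  have hlog : a * (log b - log a) ≤ b - a :=
    calc a * (log b - log a) = a * log (b / a) := by rw [log_div hb.ne' ha.ne']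
      _ ≤ a * (b / a - 1) := by gcongr; exact log_le_sub_one_of_pos (div_pos hb ha)
      _ = b - a := by field_simp
  calc a * logb 2 b - a * logb 2 a = a * (log b - log a) / log 2 := by unfold logb; ring
    _ ≤ (b - a) / log 2 := by gcongr

theorem entropy_le_cross_entropy (f g : α → ℝ) (hf : ∀ a, 0 ≤ f a) (hg : ∀ a, 0 ≤ g a)
    (hsum : ∑ a, g a ≤ ∑ a, f a) (hfg : ∀ a, g a = 0 → f a = 0) :
    entropy f ≤ -∑ a, f a * logb 2 (g a) := by
  have h := sum_le_sum fun a (_ : a ∈ univ) => mul_logb_sub_mul_logb_le (hf a) (hg a) (hfg a)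
  rw [sum_sub_distrib, ← sum_div, sum_sub_distrib] at h
  have : (∑ a, g a - ∑ a, f a) / log 2 ≤ 0 :=
    div_nonpos_of_nonpos_of_nonneg (by linarith) (log_nonneg one_le_two)
  unfold entropy
  linarith

theorem entropy_le_logb_card [Nonempty α] {p : α → ℝ} (h0 : ∀ a, 0 ≤ p a) (h1 : ∑ a, p a = 1) :
    entropy p ≤ logb 2 (Fintype.card α) := by
  have hc : (0 : ℝ) < Fintype.card α := by exact_mod_cast Fintype.card_pos
  refine (entropy_le_cross_entropy p (fun _ => (Fintype.card α : ℝ)⁻¹) h0 (fun _ => by positivity)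
    ?_ fun _ h => absurd h (by positivity)).trans_eq ?_
  · rw [h1, sum_const, card_univ, nsmul_eq_mul, mul_inv_cancel₀ hc.ne']
  · rw [← sum_mul, h1, one_mul, logb_inv, neg_neg]

theorem entropy_le_sSup_entropy [Nonempty α] {P : (α → ℝ) → Prop} {p : α → ℝ}
    (h0 : ∀ a, 0 ≤ p a) (h1 : ∑ a, p a = 1) (hP : P p) :
    entropy p ≤ sSup {h : ℝ | ∃ p : α → ℝ, (∀ a, 0 ≤ p a) ∧ (∑ a, p a = 1) ∧ P p ∧ h = entropy p} := by
  refine le_csSup ⟨logb 2 (Fintype.card α), ?_⟩ ⟨p, h0, h1, hP, rfl⟩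
  rintro _ ⟨p, h0, h1, -, rfl⟩
  exact entropy_le_logb_card h0 h1

theorem logb_le_entropy_of_le_one_div {p : α → ℝ} {N : ℝ} (h0 : ∀ a, 0 ≤ p a)
    (h1 : ∑ a, p a = 1) (hle : ∀ a, p a ≤ 1 / N) :
    logb 2 N ≤ entropy p := by
  have key : ∀ a, p a * logb 2 N ≤ -(p a * logb 2 (p a)) := by
    intro a
    rcases (h0 a).eq_or_lt with ha | ha
    · simp [← ha]
    have : logb 2 (p a) ≤ -logb 2 N := by
      rw [← logb_inv, ← one_div]
      exact logb_le_logb_of_le one_lt_two ha (hle a)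
    nlinarith
  calc logb 2 N = ∑ a, p a * logb 2 N := by rw [← sum_mul, h1, one_mul]
    _ ≤ ∑ a, -(p a * logb 2 (p a)) := sum_le_sum fun a _ => key a
    _ = entropy p := by rw [sum_neg_distrib, entropy]

end Entropy

section JointDistribution

variable [Fintype β] {q : β × α → ℝ}

def sndMarginal (q : β × α → ℝ) (x : α) : ℝ := ∑ m, q (m, x)

lemma sndMarginal_nonneg (hq : ∀ z, 0 ≤ q z) (x : α) : 0 ≤ sndMarginal q x :=
  sum_nonneg fun m _ => hq (m, x)

lemma le_sndMarginal (hq : ∀ z, 0 ≤ q z) (z : β × α) : q z ≤ sndMarginal q z.2 :=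
  single_le_sum (fun m _ => hq (m, z.2)) (mem_univ z.1)

variable [Fintype α]

/-- `H(M | X)` for a joint pmf of `(M, X)` on `β × α`. -/
noncomputable def condEntropy (q : β × α → ℝ) : ℝ :=
  -∑ m, ∑ x, q (m, x) * logb 2 (q (m, x) / sndMarginal q x)

lemma sum_sndMarginal (q : β × α → ℝ) : ∑ x, sndMarginal q x = ∑ z, q z :=
  (Fintype.sum_prod_type_right q).symm

lemma sum_filter_snd_eq_sum_sndMarginal (q : β × α → ℝ) (P : α → Prop) [DecidablePred P] :
    ∑ z with P z.2, q z = ∑ x with P x, sndMarginal q x := by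
  rw [sum_filter, sum_filter, Fintype.sum_prod_type_right]
  refine sum_congr rfl fun x _ => ?_
  split_ifs <;> simp [sndMarginal]

theorem entropy_eq_condEntropy_add_entropy_sndMarginal (hq : ∀ z, 0 ≤ q z) :
    entropy q = condEntropy q + entropy (sndMarginal q) := by
  have hsplit : ∀ z, q z * logb 2 (q z) =
      q z * logb 2 (q z / sndMarginal q z.2) + q z * logb 2 (sndMarginal q z.2) := by
    intro z
    rcases (hq z).eq_or_lt with hz | hz
    · simp [← hz]
    have hx : 0 < sndMarginal q z.2 := hz.trans_le (le_sndMarginal hq z)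
    rw [logb_div hz.ne' hx.ne']
    ring
  have hmarg : ∑ z, q z * logb 2 (sndMarginal q z.2) =
      ∑ x, sndMarginal q x * logb 2 (sndMarginal q x) := by
    rw [Fintype.sum_prod_type_right]
    simp only [sndMarginal, sum_mul]
  rw [entropy, entropy, condEntropy, sum_congr rfl fun z _ => hsplit z, sum_add_distrib, hmarg,
    Fintype.sum_prod_type]
  ring

end JointDistribution

section CoordinateMarginals

variable [Fintype α] [Fintype β] [Fintype ι] [DecidableEq ι] [DecidableEq α] {p : (ι → α) → ℝ}

def coordMarginal (p : (ι → α) → ℝ) (i : ι) (s : α) : ℝ := ∑ x with x i = s, p x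

lemma coordMarginal_nonneg (hp : ∀ x, 0 ≤ p x) (i : ι) (s : α) : 0 ≤ coordMarginal p i s :=
  sum_nonneg fun x _ => hp x

lemma le_coordMarginal (hp : ∀ x, 0 ≤ p x) (i : ι) (x : ι → α) : p x ≤ coordMarginal p i (x i) :=
  single_le_sum (fun y _ => hp y) (by simp)

lemma sum_coordMarginal_mul (p : (ι → α) → ℝ) (i : ι) (f : α → ℝ) :
    ∑ s, coordMarginal p i s * f s = ∑ x, p x * f (x i) := by
  rw [← sum_fiberwise univ (fun x : ι → α => x i)]
  refine sum_congr rfl fun s _ => ?_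
  rw [coordMarginal, sum_mul]
  exact sum_congr rfl fun x hx => by rw [(mem_filter.mp hx).2]

lemma sum_coordMarginal (p : (ι → α) → ℝ) (i : ι) : ∑ s, coordMarginal p i s = ∑ x, p x := by
  simpa using sum_coordMarginal_mul p i fun _ => 1

lemma sum_coordMarginal_sndMarginal (q : β × (ι → α) → ℝ) (i : ι) (T : Finset α) :
    ∑ s ∈ T, coordMarginal (sndMarginal q) i s = ∑ z with z.2 i ∈ T, q z := by
  rw [sum_filter_snd_eq_sum_sndMarginal q fun x => x i ∈ T]
  exact sum_fiberwise_eq_sum_filter _ _ _ _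

lemma sum_prod_coordMarginal (p : (ι → α) → ℝ) :
    ∑ x : ι → α, ∏ i, coordMarginal p i (x i) = (∑ x, p x) ^ Fintype.card ι := by
  simp only [← Fintype.prod_sum, sum_coordMarginal, prod_const, card_univ]

theorem entropy_le_sum_entropy_coordMarginal (hp0 : ∀ x, 0 ≤ p x) (hp1 : ∑ x, p x = 1) :
    entropy p ≤ ∑ i, entropy (coordMarginal p i) := by
  have hlog : ∀ x, p x * logb 2 (∏ i, coordMarginal p i (x i)) =
      ∑ i, p x * logb 2 (coordMarginal p i (x i)) := by
    intro x
    rcases (hp0 x).eq_or_lt with hx | hx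
    · simp [← hx]
    rw [logb_prod _ _ fun i _ => (hx.trans_le (le_coordMarginal hp0 i x)).ne', mul_sum]
  refine (entropy_le_cross_entropy p _ hp0
    (fun x => prod_nonneg fun i _ => coordMarginal_nonneg hp0 i (x i))
    (by rw [sum_prod_coordMarginal, hp1, one_pow]) fun x hx => ?_).trans_eq ?_
  · obtain ⟨i, -, hi⟩ := prod_eq_zero_iff.mp hx
    exact le_antisymm (hi ▸ le_coordMarginal hp0 i x) (hp0 x)
  · rw [sum_congr rfl fun x _ => hlog x, sum_comm, ← sum_neg_distrib]
    simp only [entropy, sum_coordMarginal_mul]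

end CoordinateMarginals

theorem stmt17_general (C n Nmsg : ℕ)
    (𝒲 : Finset (Finset (Fin C)))
    (pinn : (Fin C → Bool) → ℝ)
    (q : Fin Nmsg × (Fin n → Fin C → Bool) → ℝ)
    (hq0 : ∀ z, 0 ≤ q z) (hq1 : ∑ z, q z = 1)
    (huniform : ∀ m : Fin Nmsg, ∑ x, q (m, x) = 1 / Nmsg)
    (εn : ℝ)
    -- Fano reliability: H(M | X) ≤ n·ε_n
    (hfano : -∑ m, ∑ x, q (m, x) * Real.logb 2 (q (m, x) / ∑ m', q (m', x)) ≤ n * εn)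
    -- deniability: every per-time-step marginal of X matches the innocent
    -- marginal on every W ∈ 𝒲
    (hden : ∀ j : Fin n, ∀ W ∈ 𝒲, ∀ y : Fin C → Bool,
      (∑ z ∈ Finset.univ.filter
          (fun z : Fin Nmsg × (Fin n → Fin C → Bool) =>
            z.2 j ∈ Finset.univ.filter (fun s : Fin C → Bool => ∀ i ∈ W, s i = y i)), q z) =
        ∑ s ∈ Finset.univ.filter (fun s : Fin C → Bool => ∀ i ∈ W, s i = y i), pinn s) :
    Real.logb 2 Nmsg ≤
      n * sSup {h : ℝ | ∃ p : (Fin C → Bool) → ℝ,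
          (∀ s, 0 ≤ p s) ∧ (∑ s, p s = 1) ∧
          (∀ W ∈ 𝒲, ∀ y : Fin C → Bool,
            (∑ s ∈ Finset.univ.filter (fun s : Fin C → Bool => ∀ i ∈ W, s i = y i), p s) =
              ∑ s ∈ Finset.univ.filter (fun s : Fin C → Bool => ∀ i ∈ W, s i = y i), pinn s) ∧
          h = entropy p} +
        n * εn := by
  have hX0 := sndMarginal_nonneg hq0
  have hX1 : ∑ x, sndMarginal q x = 1 := (sum_sndMarginal q).trans hq1
  have hq_le : ∀ z, q z ≤ 1 / Nmsg := fun z =>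
    (single_le_sum (fun x _ => hq0 (z.1, x)) (mem_univ z.2)).trans_eq (huniform z.1)
  refine (logb_le_entropy_of_le_one_div hq0 hq1 hq_le).trans ?_
  rw [entropy_eq_condEntropy_add_entropy_sndMarginal hq0, add_comm]
  refine add_le_add ?_ hfano
  refine (entropy_le_sum_entropy_coordMarginal hX0 hX1).trans ?_
  conv_rhs => rw [← Fintype.card_fin n, ← card_univ, ← nsmul_eq_mul, ← sum_const]
  exact sum_le_sum fun j _ => entropy_le_sSup_entropy (coordMarginal_nonneg hX0 j)
    ((sum_coordMarginal _ j).trans hX1)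
    fun W hW y => (sum_coordMarginal_sndMarginal q j _).trans (hden j W hW y)

/-- Converse for reliable-deniable communication over a multipath network with
`C` unit-capacity links (per-symbol alphabet `Fin C → Bool`, of size `2^C`).
If the message `M` is uniform on `Nmsg = 2^{nR}` messages, the scheme is
Fano-reliable (`H(M|X) ≤ n·ε_n`), and each per-time-step marginal of the
transmitted codeword matches the innocent marginal `p^i` on every eavesdroppable
subset `W ∈ 𝒲`, then `nR = log₂ Nmsg ≤ n·C_d + n·ε_n`, where
`C_d = sup { H(p) : p_W = p^i_W for all W ∈ 𝒲 }`. -/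
theorem stmt17 (C n Nmsg : ℕ) (hn : 0 < n) (hNmsg : 1 ≤ Nmsg)
    (𝒲 : Finset (Finset (Fin C)))
    (pinn : (Fin C → Bool) → ℝ)
    (hpinn0 : ∀ s, 0 ≤ pinn s) (hpinn1 : ∑ s, pinn s = 1)
    (q : Fin Nmsg × (Fin n → Fin C → Bool) → ℝ)
    (hq0 : ∀ z, 0 ≤ q z) (hq1 : ∑ z, q z = 1)
    (huniform : ∀ m : Fin Nmsg, ∑ x, q (m, x) = 1 / Nmsg)
    (εn : ℝ)
    -- Fano reliability: H(M | X) ≤ n·ε_n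
    (hfano : -∑ m, ∑ x, q (m, x) * Real.logb 2 (q (m, x) / ∑ m', q (m', x)) ≤ n * εn)
    -- deniability: every per-time-step marginal of X matches the innocent
    -- marginal on every W ∈ 𝒲
    (hden : ∀ j : Fin n, ∀ W ∈ 𝒲, ∀ y : Fin C → Bool,
      (∑ z ∈ Finset.univ.filter
          (fun z : Fin Nmsg × (Fin n → Fin C → Bool) =>
            z.2 j ∈ Finset.univ.filter (fun s : Fin C → Bool => ∀ i ∈ W, s i = y i)), q z) =
        ∑ s ∈ Finset.univ.filter (fun s : Fin C → Bool => ∀ i ∈ W, s i = y i), pinn s) :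
    Real.logb 2 Nmsg ≤
      n * sSup {h : ℝ | ∃ p : (Fin C → Bool) → ℝ,
          (∀ s, 0 ≤ p s) ∧ (∑ s, p s = 1) ∧
          (∀ W ∈ 𝒲, ∀ y : Fin C → Bool,
            (∑ s ∈ Finset.univ.filter (fun s : Fin C → Bool => ∀ i ∈ W, s i = y i), p s) =
              ∑ s ∈ Finset.univ.filter (fun s : Fin C → Bool => ∀ i ∈ W, s i = y i), pinn s) ∧
          h = entropy p} +
        n * εn :=
  stmt17_general C n Nmsg 𝒲 pinn q hq0 hq1 huniform εn hfano hden
end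

section
/- For the reliable-deniable-hidable converse: if a scheme with uniform message M of rate R satisfies strong secrecy I(M; X_W) ≤ ε_sec for every W ∈ 𝒲 and Fano-reliability H(M | X) ≤ n·ε_n where X = (X_W, X_{W^c}), then nR ≤ min_{W ∈ 𝒲} H(X_{W^c} | X_W) + n·ε_n + ε_sec. -/
/-!
For every observed set `W`, the chain rule gives
`H(M) = H(M | X_W) + I(M; X_W) ≤ H(M, X | X_W) + I(M; X_W) = H(X | X_W) + H(M | X) + I(M; X_W)`,
with `H(M) = log₂ Nmsg` for a uniform message; reliability bounds `H(M | X)` and secrecy bounds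
`I(M; X_W)`. Termwise, the inequality is `q(m, x) ≤ q(m, [x]_W)`.
-/

open Finset Real

theorem mul_logb_div_add_mul_logb_div_le {a pM pX pW pMW : ℝ} (ha : 0 ≤ a) (hM : a ≤ pM)
    (hX : a ≤ pX) (hMW : a ≤ pMW) (hXW : pX ≤ pW) :
    a * logb 2 (a / pX) + a * logb 2 (pX / pW)
      ≤ a * logb 2 pM + a * logb 2 (pMW / (pM * pW)) := by
  rcases ha.eq_or_lt with rfl | ha
  · simp
  have hMp : 0 < pM := ha.trans_le hM
  have hXp : 0 < pX := ha.trans_le hX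
  have hMWp : 0 < pMW := ha.trans_le hMW
  have hWp : 0 < pW := hXp.trans_le hXW
  rw [logb_div ha.ne' hXp.ne', logb_div hXp.ne' hWp.ne',
    logb_div hMWp.ne' (mul_pos hMp hWp).ne', logb_mul hMp.ne' hWp.ne']
  have hlog : a * logb 2 a ≤ a * logb 2 pMW :=
    mul_le_mul_of_nonneg_left (logb_le_logb_of_le one_lt_two ha hMW) ha.le
  linarith

namespace JointDist

variable {α β : Type*} [Fintype α] [Fintype β]

/-! A joint law of `(M, X)` is a function `q : α × β → ℝ`. An observer of `X` sees the class
`view x : Finset β` of outcomes it cannot tell apart from `x`, so `∑ x' ∈ view x, q (m, x')`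
is the law of `(M, X_W)`. -/

/-- `H(M)`. -/
noncomputable def entropyFst (q : α × β → ℝ) : ℝ :=
  -∑ m, (∑ x, q (m, x)) * logb 2 (∑ x, q (m, x))

/-- `H(M | X)`. -/
noncomputable def condEntropyFst (q : α × β → ℝ) : ℝ :=
  -∑ m, ∑ x, q (m, x) * logb 2 (q (m, x) / ∑ m', q (m', x))

/-- `H(X | X_W)`. -/
noncomputable def condEntropySndView (q : α × β → ℝ) (view : β → Finset β) : ℝ :=
  -∑ x, (∑ m, q (m, x)) * logb 2 ((∑ m, q (m, x)) / ∑ x' ∈ view x, ∑ m, q (m, x'))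

/-- `I(M; X_W)`. -/
noncomputable def mutualInfoView (q : α × β → ℝ) (view : β → Finset β) : ℝ :=
  ∑ m, ∑ x, q (m, x) * logb 2
    ((∑ x' ∈ view x, q (m, x')) / ((∑ x', q (m, x')) * ∑ x' ∈ view x, ∑ m', q (m', x')))

theorem entropyFst_of_uniform {q : α × β → ℝ}
    (huniform : ∀ m, ∑ x, q (m, x) = 1 / Fintype.card α) :
    entropyFst q = logb 2 (Fintype.card α) := by
  simp only [entropyFst, huniform, sum_const, card_univ, nsmul_eq_mul, one_div, logb_inv]
  rcases eq_or_ne (Fintype.card α : ℝ) 0 with h | h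
  · simp [h]
  · field_simp

theorem entropyFst_le (q : α × β → ℝ) (hq0 : ∀ z, 0 ≤ q z) (view : β → Finset β)
    (hview : ∀ x, x ∈ view x) :
    entropyFst q ≤ condEntropySndView q view + condEntropyFst q + mutualInfoView q view := by
  have htermwise : ∑ m, ∑ x,
      (q (m, x) * logb 2 (q (m, x) / ∑ m', q (m', x)) +
        q (m, x) * logb 2 ((∑ m', q (m', x)) / ∑ x' ∈ view x, ∑ m', q (m', x'))) ≤
      ∑ m, ∑ x,
      (q (m, x) * logb 2 (∑ x', q (m, x')) +
        q (m, x) * logb 2 ((∑ x' ∈ view x, q (m, x')) /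
          ((∑ x', q (m, x')) * ∑ x' ∈ view x, ∑ m', q (m', x')))) := by
    refine sum_le_sum fun m _ => sum_le_sum fun x _ => ?_
    exact mul_logb_div_add_mul_logb_div_le (hq0 _)
      (single_le_sum (fun x' _ => hq0 (m, x')) (mem_univ x))
      (single_le_sum (fun m' _ => hq0 (m', x)) (mem_univ m))
      (single_le_sum (fun x' _ => hq0 (m, x')) (hview x))
      (single_le_sum (fun x' _ => sum_nonneg fun m' _ => hq0 (m', x')) (hview x))
  have hentropy : ∑ m, ∑ x, q (m, x) * logb 2 (∑ x', q (m, x')) = -entropyFst q := by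
    simp only [entropyFst, neg_neg, ← sum_mul]
  have hcond : ∑ m, ∑ x,
      q (m, x) * logb 2 ((∑ m', q (m', x)) / ∑ x' ∈ view x, ∑ m', q (m', x')) =
      -condEntropySndView q view := by
    rw [condEntropySndView, neg_neg, sum_comm]
    simp only [← sum_mul]
  simp only [sum_add_distrib, hentropy, hcond] at htermwise
  rw [condEntropyFst, mutualInfoView]
  linarith

end JointDist

open JointDist

theorem stmt18_general (C n Nmsg : ℕ)
    (𝒲 : Finset (Finset (Fin C))) (h𝒲 : 𝒲.Nonempty)
    (q : Fin Nmsg × (Fin n → Fin C → Bool) → ℝ)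
    (hq0 : ∀ z, 0 ≤ q z)
    (huniform : ∀ m : Fin Nmsg, ∑ x, q (m, x) = 1 / Nmsg)
    (εn εsec : ℝ)
    -- Fano reliability: H(M | X) ≤ n·ε_n
    (hfano : -∑ m, ∑ x, q (m, x) * Real.logb 2 (q (m, x) / ∑ m', q (m', x)) ≤ n * εn)
    -- strong secrecy: I(M; X_W) ≤ ε_sec for every W ∈ 𝒲
    (hsec : ∀ W ∈ 𝒲,
      (∑ m, ∑ x : Fin n → Fin C → Bool,
        q (m, x) * Real.logb 2
          ((∑ x' ∈ Finset.univ.filter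
              (fun x' : Fin n → Fin C → Bool => ∀ j, ∀ i ∈ W, x' j i = x j i), q (m, x')) /
            ((∑ x', q (m, x')) *
              (∑ x' ∈ Finset.univ.filter
                (fun x' : Fin n → Fin C → Bool => ∀ j, ∀ i ∈ W, x' j i = x j i),
                  ∑ m', q (m', x'))))) ≤ εsec) :
    Real.logb 2 Nmsg ≤
      𝒲.inf' h𝒲 (fun W =>
        -∑ x : Fin n → Fin C → Bool,
          (∑ m, q (m, x)) * Real.logb 2
            ((∑ m, q (m, x)) /
              (∑ x' ∈ Finset.univ.filter
                (fun x' : Fin n → Fin C → Bool => ∀ j, ∀ i ∈ W, x' j i = x j i),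
                  ∑ m, q (m, x')))) +
        n * εn + εsec := by
  let view (W : Finset (Fin C)) (x : Fin n → Fin C → Bool) :=
    univ.filter fun x' : Fin n → Fin C → Bool => ∀ j, ∀ i ∈ W, x' j i = x j i
  have hH : entropyFst q = logb 2 Nmsg := by
    simpa using entropyFst_of_uniform (q := q) (by simpa using huniform)
  have hbound : ∀ W ∈ 𝒲, logb 2 Nmsg - n * εn - εsec ≤ condEntropySndView q (view W) :=
    fun W hW => by
      have hchain := entropyFst_le q hq0 (view W) (fun x => by simp [view])
      have hsecW : mutualInfoView q (view W) ≤ εsec := hsec W hW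
      have hreliable : condEntropyFst q ≤ n * εn := hfano
      linarith
  change logb 2 Nmsg ≤ 𝒲.inf' h𝒲 (fun W => condEntropySndView q (view W)) + n * εn + εsec
  linarith [le_inf' h𝒲 _ hbound]

/-- Converse for reliable-deniable-hidable communication: if the uniform message
`M` (over `Nmsg = 2^{nR}` messages) satisfies strong secrecy
`I(M; X_W) ≤ ε_sec` for every eavesdroppable subset `W ∈ 𝒲` and Fano-reliability
`H(M|X) ≤ n·ε_n`, then `nR = log₂ Nmsg ≤ min_{W∈𝒲} H(X_{W^c}|X_W) + n·ε_n + ε_sec`.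
Here `X_W` is the restriction of the codeword `X` to the links in `W`, realized
by summing over the equivalence classes `{x' : x' agrees with x on W}`, and
`H(X_{W^c}|X_W) = H(X) - H(X_W)` is written as
`-Σ_x q_X(x)·log₂(q_X(x)/q_{X_W}([x]_W))`. -/
theorem stmt18 (C n Nmsg : ℕ) (hn : 0 < n) (hNmsg : 1 ≤ Nmsg)
    (𝒲 : Finset (Finset (Fin C))) (h𝒲 : 𝒲.Nonempty)
    (q : Fin Nmsg × (Fin n → Fin C → Bool) → ℝ)
    (hq0 : ∀ z, 0 ≤ q z) (hq1 : ∑ z, q z = 1)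
    (huniform : ∀ m : Fin Nmsg, ∑ x, q (m, x) = 1 / Nmsg)
    (εn εsec : ℝ)
    -- Fano reliability: H(M | X) ≤ n·ε_n
    (hfano : -∑ m, ∑ x, q (m, x) * Real.logb 2 (q (m, x) / ∑ m', q (m', x)) ≤ n * εn)
    -- strong secrecy: I(M; X_W) ≤ ε_sec for every W ∈ 𝒲
    (hsec : ∀ W ∈ 𝒲,
      (∑ m, ∑ x : Fin n → Fin C → Bool,
        q (m, x) * Real.logb 2
          ((∑ x' ∈ Finset.univ.filter
              (fun x' : Fin n → Fin C → Bool => ∀ j, ∀ i ∈ W, x' j i = x j i), q (m, x')) /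
            ((∑ x', q (m, x')) *
              (∑ x' ∈ Finset.univ.filter
                (fun x' : Fin n → Fin C → Bool => ∀ j, ∀ i ∈ W, x' j i = x j i),
                  ∑ m', q (m', x'))))) ≤ εsec) :
    Real.logb 2 Nmsg ≤
      𝒲.inf' h𝒲 (fun W =>
        -∑ x : Fin n → Fin C → Bool,
          (∑ m, q (m, x)) * Real.logb 2
            ((∑ m, q (m, x)) /
              (∑ x' ∈ Finset.univ.filter
                (fun x' : Fin n → Fin C → Bool => ∀ j, ∀ i ∈ W, x' j i = x j i),
                  ∑ m, q (m, x')))) +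
        n * εn + εsec :=
  stmt18_general C n Nmsg 𝒲 h𝒲 q hq0 huniform εn εsec hfano hsec
end
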